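/- In the setting of the generalized Frobenius code construction (n | p^{dm}+1, X^n-1 = g·∏_{i<d} σ^i(h) over F_p(η) with [F_p(η):F_p]=d, a defined by a ≡ 1 mod g and a ≡ σ^i(αη) mod σ^i(h)), the polynomial a satisfies a(X^{-1}) ≡ a(X) (mod (X^n-1)/g), and consequently the uniquely cyclic subspace S = {(u·g, u·a·g) : u ∈ F_p[X]/(X^n-1)} of F_p^n × F_p^n is totally isotropic for the symplectic form ⟨(a,b),(c,d)⟩ = a^T d - b^T c. -/

import Mathlib

/-!
Since `a` has coefficients in `𝔽_p`, `a(X)^(p^k) = a(X^(p^k))`. Modulo the conjugate `σ^i(h)`,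
`a` is congruent to a constant `c ∈ 𝔽_(p^d)`, hence `a(X^(p^(dm))) = a^(p^(dm)) ≡ c^(p^(dm)) = c ≡ a`;
and `X^(p^(dm)) ≡ X^(n-1) = X⁻¹` modulo `X^n - 1` because `n ∣ p^(dm) + 1`. As the conjugates are
pairwise coprime, their product `(X^n - 1)/g` divides `a(X⁻¹) - a`.

The dot product of the coefficient vectors of two polynomials of degree `< n` is the constant term
of `f(X) f'(X⁻¹)` in `R[X]/(X^n - 1)`. So the symplectic form on the images of `u` and `v` is the
constant term of `ug·(vag)(X⁻¹) - uag·(vg)(X⁻¹) = u v(X⁻¹) g(X⁻¹) · g(a(X⁻¹) - a)`, which vanishes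
because `X^n - 1 = g · (X^n - 1)/g` divides `g(a(X⁻¹) - a)`.
-/

open Polynomial

/-- The coefficient vector of a polynomial, truncated to length `n`. -/
def polyToVec {p : ℕ} (n : ℕ) (q : Polynomial (ZMod p)) : Fin n → ZMod p :=
  fun i => q.coeff (i : ℕ)

/-- The symplectic form `⟨(a,b),(c,d)⟩ = aᵀd - bᵀc` on `F_p^n × F_p^n`. -/
def sympForm {p n : ℕ} (u v : (Fin n → ZMod p) × (Fin n → ZMod p)) : ZMod p :=
  (∑ i : Fin n, u.1 i * v.2 i) - (∑ i : Fin n, u.2 i * v.1 i)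

theorem Nat.dvd_add_sub_one_mul_iff {n i j : ℕ} (hi : i < n) (hj : j < n) :
    n ∣ i + (n - 1) * j ↔ i = j := by
  have hshift : i + (n - 1) * j + j = i + n * j := by
    rw [add_assoc, ← Nat.succ_mul, Nat.succ_eq_add_one, Nat.sub_add_cancel (by omega : 1 ≤ n)]
  rw [← Nat.modEq_zero_iff_dvd, ← (Nat.ModEq.refl j).add_iff_right, hshift, zero_add, Nat.ModEq,
    Nat.add_mul_mod_self_left]
  exact ⟨fun h => Nat.ModEq.eq_of_lt_of_lt h hi hj, fun h => h ▸ rfl⟩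

theorem pow_sub_one_dvd_pow_sub_pow_of_modEq {R : Type*} [CommRing R] (x : R) {n e f : ℕ}
    (h : e ≡ f [MOD n]) : x ^ n - 1 ∣ x ^ e - x ^ f := by
  wlog hfe : f ≤ e generalizing e f
  · exact dvd_sub_comm.mp (this h.symm (by omega))
  obtain ⟨k, hk⟩ := (Nat.modEq_iff_dvd' hfe).mp h.symm
  rw [← Nat.add_sub_cancel' hfe, hk, pow_add, ← mul_sub_one]
  exact (pow_one_sub_dvd_pow_mul_sub_one x n k).mul_left _

namespace Polynomial

variable {R : Type*} [CommRing R]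

theorem monic_X_pow_sub_one {n : ℕ} (hn : n ≠ 0) : (X ^ n - 1 : R[X]).Monic := by
  simpa using monic_X_pow_sub_C (1 : R) hn

theorem natDegree_modByMonic_X_pow_sub_one_lt [Nontrivial R] {n : ℕ} (hn : n ≠ 0) (P : R[X]) :
    (P %ₘ (X ^ n - 1)).natDegree < n := by
  have hdeg : (X ^ n - 1 : R[X]).natDegree = n := by rw [← C_1, natDegree_X_pow_sub_C]
  have hM1 : (X ^ n - 1 : R[X]) ≠ 1 := fun h => hn (by rw [← hdeg, h, natDegree_one])
  simpa only [hdeg] using natDegree_modByMonic_lt P (monic_X_pow_sub_one hn) hM1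

theorem X_pow_modByMonic_X_pow_sub_one [Nontrivial R] {n : ℕ} (hn : n ≠ 0) (e : ℕ) :
    (X ^ e : R[X]) %ₘ (X ^ n - 1) = X ^ (e % n) := by
  rw [modByMonic_eq_of_dvd_sub (monic_X_pow_sub_one hn)
    (pow_sub_one_dvd_pow_sub_pow_of_modEq X (Nat.mod_modEq e n).symm),
    modByMonic_eq_self_iff (monic_X_pow_sub_one hn), degree_X_pow, ← C_1,
    degree_X_pow_sub_C (Nat.pos_of_ne_zero hn)]
  exact_mod_cast Nat.mod_lt e (Nat.pos_of_ne_zero hn)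

theorem coeff_zero_mul_comp_X_pow_sub_one_modByMonic [Nontrivial R] {n : ℕ} (hn : n ≠ 0)
    {f g : R[X]} (hf : f.natDegree < n) (hg : g.natDegree < n) :
    ((f * g.comp (X ^ (n - 1))) %ₘ (X ^ n - 1)).coeff 0 = ∑ i : Fin n, f.coeff i * g.coeff i := by
  let T : R[X] →ₗ[R] R := (lcoeff R 0).comp (modByMonicHom (X ^ n - 1))
  have hT : ∀ c e, T (C c * X ^ e) = if n ∣ e then c else 0 := by
    intro c e
    simp [T, ← smul_eq_C_mul, modByMonicHom, X_pow_modByMonic_X_pow_sub_one hn, coeff_X_pow,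
      Nat.dvd_iff_mod_eq_zero, eq_comm]
  have hprod : f * g.comp (X ^ (n - 1)) = ∑ i ∈ Finset.range n, ∑ j ∈ Finset.range n,
      C (f.coeff i * g.coeff j) * X ^ (i + (n - 1) * j) := by
    conv_lhs => rw [f.as_sum_range_C_mul_X_pow' hf, g.as_sum_range_C_mul_X_pow' hg]
    simp only [Finset.sum_mul_sum, sum_comp, mul_comp, C_comp, X_pow_comp, C_mul, pow_add, pow_mul]
    refine Finset.sum_congr rfl fun i _ => Finset.sum_congr rfl fun j _ => by ring
  calc ((f * g.comp (X ^ (n - 1))) %ₘ (X ^ n - 1)).coeff 0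
      = ∑ i ∈ Finset.range n, ∑ j ∈ Finset.range n,
          if i = j then f.coeff i * g.coeff j else 0 := by
        change T _ = _
        simp only [hprod, map_sum, hT]
        refine Finset.sum_congr rfl fun i hi => Finset.sum_congr rfl fun j hj => ?_
        exact if_congr (Nat.dvd_add_sub_one_mul_iff (Finset.mem_range.mp hi) (Finset.mem_range.mp hj))
          rfl rfl
    _ = ∑ i : Fin n, f.coeff i * g.coeff i := by
        rw [Fin.sum_univ_eq_sum_range (fun i => f.coeff i * g.coeff i)]
        exact Finset.sum_congr rfl fun i hi => by rw [Finset.sum_ite_eq, if_pos hi]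

theorem sub_dvd_comp_sub_comp (A u v : R[X]) : u - v ∣ A.comp u - A.comp v := by
  simpa only [eval_map, comp] using sub_dvd_eval_sub u v (A.map C)

theorem dvd_comp_X_pow_sub_one_sub_self {n N : ℕ} {h A : R[X]} {c : R} (hnN : n ∣ N + 1)
    (hA : A ^ N = A.comp (X ^ N)) (hc : c ^ N = c) (hh : h ∣ X ^ n - 1) (hAc : h ∣ A - C c) :
    h ∣ A.comp (X ^ (n - 1)) - A := by
  have hN : n - 1 ≡ N [MOD n] := Nat.ModEq.add_right_cancel' 1 <| by
    rw [Nat.sub_add_cancel (Nat.pos_of_dvd_of_pos hnN N.succ_pos)]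
    exact (Nat.modEq_zero_iff_dvd.2 dvd_rfl).trans (Nat.modEq_zero_iff_dvd.2 hnN).symm
  have hX : h ∣ A.comp (X ^ (n - 1)) - A.comp (X ^ N) :=
    hh.trans ((pow_sub_one_dvd_pow_sub_pow_of_modEq X hN).trans (sub_dvd_comp_sub_comp A _ _))
  rw [← AdjoinRoot.mk_eq_mk] at hAc hX ⊢
  calc AdjoinRoot.mk h (A.comp (X ^ (n - 1))) = AdjoinRoot.mk h A ^ N := by
        rw [hX, ← hA, map_pow]
    _ = AdjoinRoot.mk h A := by rw [hAc, ← map_pow, ← C_pow, hc]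

theorem X_pow_sub_one_dvd_comp_X_pow_sub {n : ℕ} {P Q : R[X]} (h : X ^ n - 1 ∣ P - Q) (k : ℕ) :
    X ^ n - 1 ∣ P.comp (X ^ k) - Q.comp (X ^ k) := by
  obtain ⟨r, hr⟩ := h
  rw [← sub_comp, hr, mul_comp, sub_comp, X_pow_comp, one_comp, ← pow_mul, mul_comm k n]
  exact (pow_one_sub_dvd_pow_mul_sub_one (X : R[X]) n k).mul_right _

theorem X_pow_sub_one_dvd_mul_comp_sub_mul_comp {n k : ℕ} {g a : R[X]}
    (hga : X ^ n - 1 ∣ g * (a.comp (X ^ k) - a)) (u v : R[X]) :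
    X ^ n - 1 ∣ (u * g) %ₘ (X ^ n - 1) * ((v * (a * g)) %ₘ (X ^ n - 1)).comp (X ^ k)
      - (u * (a * g)) %ₘ (X ^ n - 1) * ((v * g) %ₘ (X ^ n - 1)).comp (X ^ k) := by
  set M : R[X] := X ^ n - 1
  have hmod : ∀ P, AdjoinRoot.mk M (P %ₘ M) = AdjoinRoot.mk M P := fun P =>
    AdjoinRoot.mk_eq_mk.mpr (dvd_modByMonic_sub P M)
  have hcomp : ∀ P, AdjoinRoot.mk M ((P %ₘ M).comp (X ^ k)) = AdjoinRoot.mk M (P.comp (X ^ k)) :=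
    fun P => AdjoinRoot.mk_eq_mk.mpr (X_pow_sub_one_dvd_comp_X_pow_sub (dvd_modByMonic_sub P M) k)
  rw [← AdjoinRoot.mk_eq_zero] at hga ⊢
  simp only [map_sub, map_mul, hmod, hcomp, mul_comp] at hga ⊢
  linear_combination (AdjoinRoot.mk M u * AdjoinRoot.mk M (v.comp (X ^ k)) *
    AdjoinRoot.mk M (g.comp (X ^ k))) * hga

end Polynomial

theorem ZMod.expand_card_pow {p : ℕ} [Fact p.Prime] (f : (ZMod p)[X]) (k : ℕ) :
    expand (ZMod p) (p ^ k) f = f ^ p ^ k := by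
  induction k with
  | zero => simp
  | succ k ih => rw [pow_succ, expand_mul, ZMod.expand_card, map_pow, ih, pow_mul]

theorem GaloisField.pow_prime_pow_mul {p : ℕ} [Fact p.Prime] {d : ℕ} (hd : d ≠ 0)
    (x : GaloisField p d) (m : ℕ) : x ^ p ^ (d * m) = x := by
  have := Fintype.ofFinite (GaloisField p d)
  rw [pow_mul, ← GaloisField.card p d hd, Nat.card_eq_fintype_card, FiniteField.pow_card_pow]

theorem sympForm_polyToVec_modByMonic_eq_zero {p n : ℕ} [Fact (1 < p)] (hn : n ≠ 0)
    {g a : (ZMod p)[X]} (hga : X ^ n - 1 ∣ g * (a.comp (X ^ (n - 1)) - a)) (u v : (ZMod p)[X]) :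
    sympForm (polyToVec n ((u * g) %ₘ (X ^ n - 1)), polyToVec n ((u * (a * g)) %ₘ (X ^ n - 1)))
      (polyToVec n ((v * g) %ₘ (X ^ n - 1)), polyToVec n ((v * (a * g)) %ₘ (X ^ n - 1))) = 0 := by
  have hdeg := natDegree_modByMonic_X_pow_sub_one_lt (R := ZMod p) hn
  simp only [sympForm, polyToVec]
  rw [← coeff_zero_mul_comp_X_pow_sub_one_modByMonic hn (hdeg _) (hdeg _),
    ← coeff_zero_mul_comp_X_pow_sub_one_modByMonic hn (hdeg _) (hdeg _), ← coeff_sub,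
    ← sub_modByMonic, (modByMonic_eq_zero_iff_dvd (monic_X_pow_sub_one hn)).mpr
      (X_pow_sub_one_dvd_mul_comp_sub_mul_comp hga u v), coeff_zero]

theorem stmt_17_general (p d m n : ℕ) [Fact p.Prime]
    (hd : 0 < d) (hn : 0 < n) (hdvd : n ∣ p ^ (d * m) + 1)
    (η : GaloisField p d)
    (g : Polynomial (ZMod p)) (h : Polynomial (GaloisField p d))
    (hfact : (X : Polynomial (GaloisField p d)) ^ n - 1 =
      g.map (algebraMap (ZMod p) (GaloisField p d)) *
        ∏ i ∈ Finset.range d,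
          (fun q : Polynomial (GaloisField p d) =>
            q.map (frobenius (GaloisField p d) p))^[i] h)
    (hcoph : ∀ i < d, ∀ j < d, i ≠ j →
      IsCoprime ((fun q : Polynomial (GaloisField p d) =>
          q.map (frobenius (GaloisField p d) p))^[i] h)
        ((fun q : Polynomial (GaloisField p d) =>
          q.map (frobenius (GaloisField p d) p))^[j] h))
    (α : ZMod p)
    (a : Polynomial (ZMod p))
    (ha2 : ∀ i < d,
      (fun q : Polynomial (GaloisField p d) =>
        q.map (frobenius (GaloisField p d) p))^[i] h ∣
          (a.map (algebraMap (ZMod p) (GaloisField p d)) -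
            Polynomial.C ((algebraMap (ZMod p) (GaloisField p d) α * η) ^ p ^ i)))
    (S : Set ((Fin n → ZMod p) × (Fin n → ZMod p)))
    (hS : S = {w | ∃ u : Polynomial (ZMod p),
      w = (polyToVec n ((u * g) %ₘ (X ^ n - 1)),
           polyToVec n ((u * (a * g)) %ₘ (X ^ n - 1)))}) :
    ((∏ i ∈ Finset.range d,
        (fun q : Polynomial (GaloisField p d) =>
          q.map (frobenius (GaloisField p d) p))^[i] h) ∣
      ((a.map (algebraMap (ZMod p) (GaloisField p d))).comp (X ^ (n - 1)) -
        a.map (algebraMap (ZMod p) (GaloisField p d)))) ∧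
    (∀ u ∈ S, ∀ v ∈ S, sympForm u v = 0) := by
  set φ := algebraMap (ZMod p) (GaloisField p d)
  have hfrob : (a.map φ) ^ p ^ (d * m) = (a.map φ).comp (X ^ p ^ (d * m)) := by
    rw [← Polynomial.map_pow, ← ZMod.expand_card_pow, map_expand, expand_eq_comp_X_pow]
  have hconj : (∏ i ∈ Finset.range d,
      (fun q : Polynomial (GaloisField p d) => q.map (frobenius (GaloisField p d) p))^[i] h) ∣
      (a.map φ).comp (X ^ (n - 1)) - a.map φ := by
    refine Finset.prod_dvd_of_coprime (fun i hi j hj hij =>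
      hcoph i (Finset.mem_range.mp hi) j (Finset.mem_range.mp hj) hij) fun i hi => ?_
    exact dvd_comp_X_pow_sub_one_sub_self hdvd hfrob (GaloisField.pow_prime_pow_mul hd.ne' _ m)
      (hfact ▸ (Finset.dvd_prod_of_mem _ hi).mul_left _) (ha2 i (Finset.mem_range.mp hi))
  refine ⟨hconj, ?_⟩
  have hga : X ^ n - 1 ∣ g * (a.comp (X ^ (n - 1)) - a) := by
    rw [← map_dvd_map φ φ.injective (monic_X_pow_sub_one hn.ne')]
    simpa [hfact, map_comp] using mul_dvd_mul_left (g.map φ) hconj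
  subst hS
  rintro _ ⟨u, rfl⟩ _ ⟨v, rfl⟩
  exact sympForm_polyToVec_modByMonic_eq_zero hn.ne' hga u v

theorem stmt_17 (p d m n : ℕ) (hp : p.Prime) [Fact p.Prime]
    (hd : 0 < d) (hm : 0 < m) (hn : 0 < n) (hdvd : n ∣ p ^ (d * m) + 1)
    (η : GaloisField p d) (hη : Algebra.adjoin (ZMod p) {η} = ⊤)
    (g : Polynomial (ZMod p)) (h : Polynomial (GaloisField p d))
    (hfact : (X : Polynomial (GaloisField p d)) ^ n - 1 =
      g.map (algebraMap (ZMod p) (GaloisField p d)) *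
        ∏ i ∈ Finset.range d,
          (fun q : Polynomial (GaloisField p d) =>
            q.map (frobenius (GaloisField p d) p))^[i] h)
    (hcopg : ∀ i < d, IsCoprime (g.map (algebraMap (ZMod p) (GaloisField p d)))
      ((fun q : Polynomial (GaloisField p d) =>
        q.map (frobenius (GaloisField p d) p))^[i] h))
    (hcoph : ∀ i < d, ∀ j < d, i ≠ j →
      IsCoprime ((fun q : Polynomial (GaloisField p d) =>
          q.map (frobenius (GaloisField p d) p))^[i] h)
        ((fun q : Polynomial (GaloisField p d) =>
          q.map (frobenius (GaloisField p d) p))^[j] h))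
    (α : ZMod p) (hα : α ≠ 0)
    (a : Polynomial (ZMod p))
    (ha1 : g.map (algebraMap (ZMod p) (GaloisField p d)) ∣
      (a.map (algebraMap (ZMod p) (GaloisField p d)) - 1))
    (ha2 : ∀ i < d,
      (fun q : Polynomial (GaloisField p d) =>
        q.map (frobenius (GaloisField p d) p))^[i] h ∣
          (a.map (algebraMap (ZMod p) (GaloisField p d)) -
            Polynomial.C ((algebraMap (ZMod p) (GaloisField p d) α * η) ^ p ^ i)))
    (S : Set ((Fin n → ZMod p) × (Fin n → ZMod p)))
    (hS : S = {w | ∃ u : Polynomial (ZMod p),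
      w = (polyToVec n ((u * g) %ₘ (X ^ n - 1)),
           polyToVec n ((u * (a * g)) %ₘ (X ^ n - 1)))}) :
    ((∏ i ∈ Finset.range d,
        (fun q : Polynomial (GaloisField p d) =>
          q.map (frobenius (GaloisField p d) p))^[i] h) ∣
      ((a.map (algebraMap (ZMod p) (GaloisField p d))).comp (X ^ (n - 1)) -
        a.map (algebraMap (ZMod p) (GaloisField p d)))) ∧
    (∀ u ∈ S, ∀ v ∈ S, sympForm u v = 0) :=
  stmt_17_general p d m n hd hn hdvd η g h hfact hcoph α a ha2 S hS
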